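/- Fix Δx > 0, Δt > 0, λ ∈ ℝ and an integer M ≥ 1. Let u : ℤ × ℤ → ℝ be a grid function with u(m + M, n) = u(m, n) for all (m,n) (spatial M-periodicity), and suppose u satisfies the EC₁₀(λ) scheme at every point: D_m(μ_m φ) + D_n u_{0,0} = 0, where φ = (1/3)·(μ_n((u_{-1,0})²))·(μ_n u_{-1,0}) + D_m²μ_n u_{-2,0} + λ·D_m D_n μ_m u_{-2,0}. Then the discrete energy Σ_{i=0}^{M−1} [ (1/12)·u(i,n)⁴ + (1/2)·u(i,n)·(D_m² u_{-1,0})(i,n) ] is independent of n. -/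

import Mathlib

noncomputable section

/-- Shift operator: `(Sh i j u)(m,n) = u(m+i, n+j)`. -/
def Sh (i j : ℤ) (f : ℤ × ℤ → ℝ) : ℤ × ℤ → ℝ := fun p => f (p.1 + i, p.2 + j)

/-- Forward difference in space: `D_m f = (S_m f − f)/Δx`. -/
def Dm (dx : ℝ) (f : ℤ × ℤ → ℝ) : ℤ × ℤ → ℝ := fun p => (f (p.1 + 1, p.2) - f p) / dx

/-- Forward difference in time: `D_n f = (S_n f − f)/Δt`. -/
def Dn (dt : ℝ) (f : ℤ × ℤ → ℝ) : ℤ × ℤ → ℝ := fun p => (f (p.1, p.2 + 1) - f p) / dt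

/-- Forward average in space: `μ_m f = (S_m f + f)/2`. -/
def μm (f : ℤ × ℤ → ℝ) : ℤ × ℤ → ℝ := fun p => (f (p.1 + 1, p.2) + f p) / 2

/-- Forward average in time: `μ_n f = (S_n f + f)/2`. -/
def μn (f : ℤ × ℤ → ℝ) : ℤ × ℤ → ℝ := fun p => (f (p.1, p.2 + 1) + f p) / 2

/-- The quantity `φ` of the EC₁₀(λ) scheme. -/
def phiEC10 (dx dt lam : ℝ) (u : ℤ × ℤ → ℝ) : ℤ × ℤ → ℝ :=
  (1/3 : ℝ) • (μn ((Sh (-1) 0 u) ^ 2) * μn (Sh (-1) 0 u))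
    + Dm dx (Dm dx (μn (Sh (-2) 0 u)))
    + lam • Dm dx (Dn dt (μm (Sh (-2) 0 u)))

/-- Auxiliary: the discrete flux. -/
def Tflux (dx dt lam : ℝ) (u : ℤ × ℤ → ℝ) (n j : ℤ) : ℝ :=
  -(dt/(2*dx)) * (phiEC10 dx dt lam u (j+1,n)) * (phiEC10 dx dt lam u (j,n))
    - (lam/(2*dx*dt))*(u (j,n+1) - u (j,n))*(u (j+-1,n+1) - u (j+-1,n))
    + (1/(2*dx^2))*(((u (j+-1,n+1) + u (j+-1,n))/2)*(u (j,n+1) - u (j,n))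
        - (u (j+-1,n+1) - u (j+-1,n))*((u (j,n+1) + u (j,n))/2))

lemma core_alg (dx dt lam : ℝ) (hdx : dx ≠ 0) (hdt : dt ≠ 0)
    (am a0 ap bm b0 bp P0 F P2 : ℝ)
    (hF : F = (1/3) * ((a0^2 + b0^2)/2) * ((a0+b0)/2)
          + (((ap+bp)/2 - 2*((a0+b0)/2) + ((am+bm)/2))/dx^2)
          + lam * (((ap-bp) - (am-bm)) / (2*dt*dx)))
    (h : (P2 - P0)/(2*dx) + (a0 - b0)/dt = 0) :
    ((1/12)*a0^4 + (1/2)*a0*((ap - 2*a0 + am)/dx^2))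
      - ((1/12)*b0^4 + (1/2)*b0*((bp - 2*b0 + bm)/dx^2))
    = (-(dt/(2*dx))*P2*F - (lam/(2*dx*dt))*(ap-bp)*(a0-b0)
        + (1/(2*dx^2))*(((a0+b0)/2)*(ap-bp) - (a0-b0)*((ap+bp)/2)))
      - (-(dt/(2*dx))*F*P0 - (lam/(2*dx*dt))*(a0-b0)*(am-bm)
        + (1/(2*dx^2))*(((am+bm)/2)*(a0-b0) - (am-bm)*((a0+b0)/2))) := by
  have h2 : P2 = P0 - 2*dx*(a0-b0)/dt := by
    field_simp at h ⊢; linarith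
  subst hF h2
  field_simp
  ring

lemma phi_unfold (dx dt lam : ℝ) (u : ℤ × ℤ → ℝ) (i n : ℤ) :
    phiEC10 dx dt lam u (i+1, n)
      = (1/3) * ((u (i,n+1)^2 + u (i,n)^2)/2) * ((u (i,n+1) + u (i,n))/2)
        + (((u (i+1,n+1) + u (i+1,n))/2 - 2*((u (i,n+1) + u (i,n))/2)
            + ((u (i+-1,n+1) + u (i+-1,n))/2))/dx^2)
        + lam * (((u (i+1,n+1) - u (i+1,n)) - (u (i+-1,n+1) - u (i+-1,n))) / (2*dt*dx)) := by
  simp only [phiEC10, Dm, Dn, μm, μn, Sh, Pi.add_apply, Pi.mul_apply, Pi.smul_apply,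
    Pi.pow_apply, smul_eq_mul]
  norm_num
  ring_nf

lemma dd_unfold (dx : ℝ) (u : ℤ × ℤ → ℝ) (i t : ℤ) :
    Dm dx (Dm dx (Sh (-1) 0 u)) (i,t) = (u (i+1,t) - 2*u (i,t) + u (i+-1,t))/dx^2 := by
  simp only [Dm, Sh]
  norm_num
  ring_nf

lemma scheme_unfold (dx dt lam : ℝ) (u : ℤ × ℤ → ℝ) (i n : ℤ)
    (h : (Dm dx (μm (phiEC10 dx dt lam u)) + Dn dt u) (i, n) = 0) :
    (phiEC10 dx dt lam u (i+2, n) - phiEC10 dx dt lam u (i, n)) / (2*dx)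
      + (u (i, n+1) - u (i,n)) / dt = 0 := by
  simp only [Dm, Dn, μm, Pi.add_apply] at h
  have h2 : (i:ℤ) + 1 + 1 = i + 2 := by ring
  rw [h2] at h
  linear_combination h

lemma sh_phi (dx dt lam : ℝ) (u : ℤ × ℤ → ℝ) (a : ℤ) :
    Sh a 0 (phiEC10 dx dt lam u) = phiEC10 dx dt lam (Sh a 0 u) := by
  funext p
  simp only [phiEC10, Dm, Dn, μm, μn, Sh, Pi.add_apply, Pi.mul_apply, Pi.smul_apply,
    Pi.pow_apply, smul_eq_mul]
  norm_num
  ring_nf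

/-- Pointwise conservation law in flux form. -/
lemma key_pointwise (dx dt lam : ℝ) (hdx : dx ≠ 0) (hdt : dt ≠ 0)
    (u : ℤ × ℤ → ℝ)
    (i n : ℤ) (h : (Dm dx (μm (phiEC10 dx dt lam u)) + Dn dt u) (i, n) = 0) :
    ((1/12 : ℝ) * (u (i, n+1)) ^ 4
        + (1/2 : ℝ) * u (i, n+1) * Dm dx (Dm dx (Sh (-1) 0 u)) (i, n+1))
      - ((1/12 : ℝ) * (u (i, n)) ^ 4
        + (1/2 : ℝ) * u (i, n) * Dm dx (Dm dx (Sh (-1) 0 u)) (i, n))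
    = Tflux dx dt lam u n (i+1) - Tflux dx dt lam u n i := by
  have hs := scheme_unfold dx dt lam u i n h
  have hF := phi_unfold dx dt lam u i n
  rw [dd_unfold, dd_unfold]
  simp only [Tflux]
  rw [show (i:ℤ)+1+1 = i+2 by ring, show (i:ℤ)+1+-1 = i by ring]
  exact core_alg dx dt lam hdx hdt _ _ _ _ _ _ _ _ _ hF hs

/-- Spatially periodic solutions of the EC₁₀(λ) scheme conserve the discrete energy. -/
theorem EC10_discrete_energy_invariant (dx dt lam : ℝ) (hdx : 0 < dx) (hdt : 0 < dt)
    (M : ℕ) (hM : 1 ≤ M) (u : ℤ × ℤ → ℝ)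
    (hper : ∀ m n : ℤ, u (m + (M : ℤ), n) = u (m, n))
    (hscheme : ∀ p : ℤ × ℤ, (Dm dx (μm (phiEC10 dx dt lam u)) + Dn dt u) p = 0) :
    ∀ n₁ n₂ : ℤ,
      (∑ i ∈ Finset.range M,
          ((1/12 : ℝ) * (u ((i : ℤ), n₁)) ^ 4
            + (1/2 : ℝ) * u ((i : ℤ), n₁) * Dm dx (Dm dx (Sh (-1) 0 u)) ((i : ℤ), n₁)))
        = ∑ i ∈ Finset.range M,
            ((1/12 : ℝ) * (u ((i : ℤ), n₂)) ^ 4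
              + (1/2 : ℝ) * u ((i : ℤ), n₂) * Dm dx (Dm dx (Sh (-1) 0 u)) ((i : ℤ), n₂)) := by
  set E : ℤ → ℝ := fun n => ∑ i ∈ Finset.range M,
      ((1/12 : ℝ) * (u ((i : ℤ), n)) ^ 4
        + (1/2 : ℝ) * u ((i : ℤ), n) * Dm dx (Dm dx (Sh (-1) 0 u)) ((i : ℤ), n)) with hE
  -- periodicity of φ
  have hSh : Sh (M : ℤ) 0 u = u := by
    funext p
    simp only [Sh, add_zero]
    exact hper p.1 p.2
  have φper : ∀ m t : ℤ, phiEC10 dx dt lam u (m + (M:ℤ), t) = phiEC10 dx dt lam u (m, t) := by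
    intro m t
    calc phiEC10 dx dt lam u (m + (M:ℤ), t) = Sh (M:ℤ) 0 (phiEC10 dx dt lam u) (m, t) := by
          simp [Sh]
      _ = phiEC10 dx dt lam (Sh (M:ℤ) 0 u) (m, t) := by rw [sh_phi]
      _ = phiEC10 dx dt lam u (m, t) := by rw [hSh]
  have Tper : ∀ (n j : ℤ), Tflux dx dt lam u n (j + (M:ℤ)) = Tflux dx dt lam u n j := by
    intro n j
    simp only [Tflux]
    rw [show j + (M:ℤ) + 1 = (j+1) + (M:ℤ) by ring, show j + (M:ℤ) + -1 = (j+-1) + (M:ℤ) by ring]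
    simp only [φper, hper]
  -- one-step conservation
  have step : ∀ n : ℤ, E (n+1) = E n := by
    intro n
    rw [← sub_eq_zero, hE]
    rw [← Finset.sum_sub_distrib]
    have : ∀ i ∈ Finset.range M,
        ((1/12 : ℝ) * (u ((i:ℤ), n+1)) ^ 4
          + (1/2 : ℝ) * u ((i:ℤ), n+1) * Dm dx (Dm dx (Sh (-1) 0 u)) ((i:ℤ), n+1))
        - ((1/12 : ℝ) * (u ((i:ℤ), n)) ^ 4
          + (1/2 : ℝ) * u ((i:ℤ), n) * Dm dx (Dm dx (Sh (-1) 0 u)) ((i:ℤ), n))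
        = (fun k : ℕ => Tflux dx dt lam u n (k : ℤ)) (i+1)
          - (fun k : ℕ => Tflux dx dt lam u n (k : ℤ)) i := by
      intro i _
      have := key_pointwise dx dt lam hdx.ne' hdt.ne' u i n (hscheme ((i:ℤ), n))
      simpa using this
    rw [Finset.sum_congr rfl this,
      Finset.sum_range_sub (f := fun k : ℕ => Tflux dx dt lam u n (k : ℤ))]
    have := Tper n 0
    rw [zero_add] at this
    simp [this]
  -- constancy
  have const : ∀ n : ℤ, E n = E 0 := by
    intro n
    induction n using Int.induction_on with
    | zero => rfl
    | succ k ih => rw [step k]; exact ih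
    | pred k ih =>
      have h := step (-(k:ℤ) - 1)
      rw [show (-(k:ℤ) - 1) + 1 = -(k:ℤ) by ring] at h
      exact h.symm.trans ih
  intro n₁ n₂
  calc E n₁ = E 0 := const n₁
    _ = E n₂ := (const n₂).symm
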